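/- arXiv:2405.14763 — 3 statements merged into one kernel-verified Lean document; each statement's English description precedes it below -/
import Mathlib

section
/- Let F_c : ℝ → ℝ be convex and differentiable and F_e : ℝ → ℝ be concave and differentiable. Then for all real a, b: (F_c'(b) + F_e'(a))·(b − a) ≥ (F_c(b) + F_e(b)) − (F_c(a) + F_e(a)). (This is the convex-splitting / Eyre inequality underlying the energy stability of the schemes.) -/
lemma convex_tangent_le (f : ℝ → ℝ) (hf : ConvexOn ℝ Set.univ f)
    (hfd : Differentiable ℝ f) (x y : ℝ) :
    deriv f x * (y - x) ≤ f y - f x := by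
  rcases lt_trichotomy x y with h | h | h
  · have := hf.deriv_le_slope (Set.mem_univ x) (Set.mem_univ y) h (hfd x)
    rw [slope_def_field] at this
    have hxy : 0 < y - x := by linarith
    calc deriv f x * (y - x) ≤ (f y - f x) / (y - x) * (y - x) := by
          exact mul_le_mul_of_nonneg_right this hxy.le
      _ = f y - f x := by field_simp
  · simp [h]
  · have := hf.slope_le_deriv (Set.mem_univ y) (Set.mem_univ x) h (hfd x)
    rw [slope_def_field] at this
    have hxy : 0 < x - y := by linarith
    have h2 : f x - f y ≤ deriv f x * (x - y) := by
      calc f x - f y = (f x - f y) / (x - y) * (x - y) := by field_simp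
        _ ≤ deriv f x * (x - y) := mul_le_mul_of_nonneg_right this hxy.le
    nlinarith

lemma concave_tangent_ge (f : ℝ → ℝ) (hf : ConcaveOn ℝ Set.univ f)
    (hfd : Differentiable ℝ f) (x y : ℝ) :
    f y - f x ≤ deriv f x * (y - x) := by
  have := convex_tangent_le (fun t => -f t) hf.neg hfd.neg x y
  have hd : deriv (fun t => -f t) x = -deriv f x := by
    simpa using deriv_neg (f := f) (x := x)
  rw [hd] at this
  nlinarith

theorem convex_splitting_inequality (Fc Fe : ℝ → ℝ)
    (hFc : ConvexOn ℝ Set.univ Fc) (hFe : ConcaveOn ℝ Set.univ Fe)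
    (hFc' : Differentiable ℝ Fc) (hFe' : Differentiable ℝ Fe)
    (a b : ℝ) :
    (deriv Fc b + deriv Fe a) * (b - a) ≥ (Fc b + Fe b) - (Fc a + Fe a) := by
  have h1 := convex_tangent_le Fc hFc hFc' b a
  have h2 := concave_tangent_ge Fe hFe hFe' a b
  nlinarith
end

section
/- For the specific splitting F_c(φ) = (1/(4η²))(φ⁴ − 2φ³ + (3/2)φ²) and F_e(φ) = −(1/(8η²))φ² with η > 0, for all real a, b one has (F_c'(b) + F_e'(a))·(b − a) ≥ F(b) − F(a), where F(φ) = (1/(4η²))φ²(1−φ)². -/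
/-!
Since `F = F_c + F_e` with `F_c` convex (`F_c'' = 3 (2φ - 1)² / (4η²) ≥ 0`) and `F_e` concave, the
tangent-line inequalities `F_c b - F_c a ≤ F_c' b (b - a)` and `F_e b - F_e a ≤ F_e' a (b - a)`
add up to the claim.
-/

open Set

theorem ConvexOn.sub_le_deriv_mul_sub {S : Set ℝ} {f : ℝ → ℝ} {a b : ℝ} (hf : ConvexOn ℝ S f)
    (ha : a ∈ S) (hb : b ∈ S) (hd : DifferentiableAt ℝ f b) : f b - f a ≤ deriv f b * (b - a) := by
  rcases lt_trichotomy a b with hab | rfl | hba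
  · have := hf.slope_le_deriv ha hb hab hd
    rwa [slope_def_field, div_le_iff₀ (sub_pos.2 hab)] at this
  · simp
  · have := hf.deriv_le_slope hb ha hba hd
    rw [slope_def_field, le_div_iff₀ (sub_pos.2 hba)] at this
    linarith

theorem ConcaveOn.sub_le_deriv_mul_sub {S : Set ℝ} {g : ℝ → ℝ} {a b : ℝ} (hg : ConcaveOn ℝ S g)
    (ha : a ∈ S) (hb : b ∈ S) (hd : DifferentiableAt ℝ g a) :
    g b - g a ≤ deriv g a * (b - a) := by
  have := hg.neg.sub_le_deriv_mul_sub hb ha hd.neg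
  simp only [Pi.neg_apply, deriv.neg'] at this
  linarith

theorem eyre_splitting_le {S : Set ℝ} {Fc Fe : ℝ → ℝ} {a b : ℝ} (hc : ConvexOn ℝ S Fc)
    (he : ConcaveOn ℝ S Fe) (ha : a ∈ S) (hb : b ∈ S) (hdc : DifferentiableAt ℝ Fc b)
    (hde : DifferentiableAt ℝ Fe a) :
    (Fc b + Fe b) - (Fc a + Fe a) ≤ (deriv Fc b + deriv Fe a) * (b - a) := by
  have := hc.sub_le_deriv_mul_sub ha hb hdc
  have := he.sub_le_deriv_mul_sub ha hb hde
  linarith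

theorem convexOn_univ_of_hasDerivAt2_nonneg {f f' f'' : ℝ → ℝ}
    (hf' : ∀ x, HasDerivAt f (f' x) x) (hf'' : ∀ x, HasDerivAt f' (f'' x) x)
    (hf''₀ : ∀ x, 0 ≤ f'' x) : ConvexOn ℝ univ f :=
  convexOn_of_hasDerivWithinAt2_nonneg convex_univ
    (fun x _ ↦ (hf' x).continuousAt.continuousWithinAt) (fun x _ ↦ (hf' x).hasDerivWithinAt)
    (fun x _ ↦ (hf'' x).hasDerivWithinAt) fun x _ ↦ hf''₀ x

theorem convexOn_univ_doubleWell_convexPart (c : ℝ) (hc : 0 ≤ c) :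
    ConvexOn ℝ univ fun φ : ℝ ↦ c * (φ ^ 4 - 2 * φ ^ 3 + (3 / 2) * φ ^ 2) := by
  refine convexOn_univ_of_hasDerivAt2_nonneg (f' := fun φ ↦ c * (4 * φ ^ 3 - 6 * φ ^ 2 + 3 * φ))
    (f'' := fun φ ↦ 3 * c * (2 * φ - 1) ^ 2) (fun x ↦ ?_) (fun x ↦ ?_) fun x ↦ by positivity
  · exact ((((hasDerivAt_pow 4 x).sub ((hasDerivAt_pow 3 x).const_mul 2)).add
      ((hasDerivAt_pow 2 x).const_mul (3 / 2))).const_mul c).congr_deriv (by push_cast; ring)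
  · exact (((((hasDerivAt_pow 3 x).const_mul 4).sub ((hasDerivAt_pow 2 x).const_mul 6)).add
      ((hasDerivAt_id x).const_mul 3)).const_mul c).congr_deriv (by push_cast; ring)

theorem concaveOn_univ_neg_mul_sq (c : ℝ) (hc : 0 ≤ c) :
    ConcaveOn ℝ univ fun φ : ℝ ↦ -c * φ ^ 2 := by
  have h : (fun φ : ℝ ↦ -c * φ ^ 2) = -fun φ ↦ c • φ ^ 2 := by ext φ; simp
  rw [h]
  exact ((Even.convexOn_pow even_two).smul hc).neg

theorem eyre_inequality_double_well_general (η : ℝ) (a b : ℝ) :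
    letI F : ℝ → ℝ := fun φ => (1 / (4 * η^2)) * φ^2 * (1 - φ)^2
    letI Fc : ℝ → ℝ := fun φ => (1 / (4 * η^2)) * (φ^4 - 2*φ^3 + (3/2)*φ^2)
    letI Fe : ℝ → ℝ := fun φ => -(1 / (8 * η^2)) * φ^2
    (deriv Fc b + deriv Fe a) * (b - a) ≥ F b - F a := by
  convert eyre_splitting_le (convexOn_univ_doubleWell_convexPart (1 / (4 * η ^ 2)) (by positivity))
    (concaveOn_univ_neg_mul_sq (1 / (8 * η ^ 2)) (by positivity)) (mem_univ a) (mem_univ b)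
    (by fun_prop) (by fun_prop) using 1
  ring

theorem eyre_inequality_double_well (η : ℝ) (hη : 0 < η) (a b : ℝ) :
    letI F : ℝ → ℝ := fun φ => (1 / (4 * η^2)) * φ^2 * (1 - φ)^2
    letI Fc : ℝ → ℝ := fun φ => (1 / (4 * η^2)) * (φ^4 - 2*φ^3 + (3/2)*φ^2)
    letI Fe : ℝ → ℝ := fun φ => -(1 / (8 * η^2)) * φ^2
    (deriv Fc b + deriv Fe a) * (b - a) ≥ F b - F a :=
  eyre_inequality_double_well_general η a b
end

section
/- For ε ∈ (0, 1/2) and T(φ) = min(max(φ, ε), 1−ε), and any two reals a ≠ b, the divided-difference quantity −(H_ε'(1−b) − H_ε'(1−a))/(G_ε'(b) − G_ε'(a)) is well defined (the denominator is nonzero) and lies in the interval [ε, 1−ε], where H_ε'' = 1/T and G_ε' (φ) = H_ε'(φ) − H_ε'(1−φ). -/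
/-!
By Cauchy's mean value theorem the divided-difference quotient equals the ratio of derivatives
`T(1-c)⁻¹ / (T(c)⁻¹ + T(1-c)⁻¹)` at some intermediate point `c`. The clamp is symmetric,
`T(1-c) = 1 - T(c)`, so this ratio is just `T(c) ∈ [ε, 1-ε]`.
-/

open Set

theorem slope_ratio_mem_of_hasDerivAt {f g f' g' : ℝ → ℝ} {S : Set ℝ}
    (hf : ∀ x, HasDerivAt f (f' x) x) (hg : ∀ x, HasDerivAt g (g' x) x)
    (hg' : ∀ x, g' x ≠ 0) (hS : ∀ x, f' x / g' x ∈ S) {a b : ℝ} (hab : a ≠ b) :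
    g b - g a ≠ 0 ∧ (f b - f a) / (g b - g a) ∈ S := by
  wlog hlt : a < b generalizing a b
  · obtain ⟨hne, hmem⟩ := this hab.symm (hab.symm.lt_of_le (not_lt.mp hlt))
    refine ⟨fun h => hne (by linarith), ?_⟩
    rwa [← neg_sub (f a), ← neg_sub (g a), neg_div_neg_eq]
  have hfc : ContinuousOn f (Icc a b) := fun x _ => (hf x).continuousAt.continuousWithinAt
  have hgc : ContinuousOn g (Icc a b) := fun x _ => (hg x).continuousAt.continuousWithinAt
  have hg_ne : g b - g a ≠ 0 := by
    obtain ⟨c, -, hc⟩ := exists_hasDerivAt_eq_slope g g' hlt hgc fun x _ => hg x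
    intro h
    exact hg' c (by rw [hc, h, zero_div])
  obtain ⟨c, -, hc⟩ :=
    exists_ratio_hasDerivAt_eq_ratio_slope f f' hlt hfc (fun x _ => hf x) g g' hgc fun x _ => hg x
  refine ⟨hg_ne, ?_⟩
  have hratio : (f b - f a) / (g b - g a) = f' c / g' c :=
    (div_eq_div_iff hg_ne (hg' c)).mpr (by linear_combination -hc)
  exact hratio ▸ hS c

theorem min_max_add_sub (s lo hi : ℝ) (h : lo ≤ hi) :
    min (max (lo + hi - s) lo) hi = lo + hi - min (max s lo) hi := by
  simp only [min_def, max_def]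
  split_ifs <;> linarith

theorem one_div_one_sub_div_one_div_add {t : ℝ} (h₀ : t ≠ 0) (h₁ : 1 - t ≠ 0) :
    1 / (1 - t) / (1 / t + 1 / (1 - t)) = t := by
  field_simp
  ring

theorem ThG_bounds (ε : ℝ) (hε0 : 0 < ε) (hε1 : ε < 1/2)
    (H' : ℝ → ℝ)
    (hH' : ∀ s : ℝ, HasDerivAt H' (1 / min (max s ε) (1 - ε)) s)
    (a b : ℝ) (hab : a ≠ b) :
    letI G' : ℝ → ℝ := fun s => H' s - H' (1 - s)
    G' b - G' a ≠ 0 ∧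
      ε ≤ -((H' (1 - b) - H' (1 - a)) / (G' b - G' a)) ∧
      -((H' (1 - b) - H' (1 - a)) / (G' b - G' a)) ≤ 1 - ε := by
  set T : ℝ → ℝ := fun s => min (max s ε) (1 - ε)
  have hT_mem (s : ℝ) : T s ∈ Icc ε (1 - ε) :=
    ⟨le_min (le_max_right _ _) (by linarith), min_le_right _ _⟩
  have hT_pos (s : ℝ) : 0 < T s ∧ 0 < 1 - T s := by
    obtain ⟨h₀, h₁⟩ := hT_mem s
    constructor <;> linarith
  have hT_symm (s : ℝ) : T (1 - s) = 1 - T s := by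
    simpa only [add_sub_cancel] using min_max_add_sub s ε (1 - ε) (by linarith)
  have hL (s : ℝ) : HasDerivAt (fun s => H' (1 - s)) (-(1 / (1 - T s))) s :=
    ((hH' (1 - s)).comp s ((hasDerivAt_id s).const_sub 1)).congr_deriv (by rw [← hT_symm]; ring)
  have hG (s : ℝ) : HasDerivAt (fun s => H' s - H' (1 - s)) (1 / T s + 1 / (1 - T s)) s :=
    ((hH' s).sub (hL s)).congr_deriv (sub_neg_eq_add _ _)
  obtain ⟨hne, hmem⟩ :=
    slope_ratio_mem_of_hasDerivAt (f := fun s => -H' (1 - s)) (fun s => (hL s).neg) hG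
      (fun s => (add_pos (one_div_pos.2 (hT_pos s).1) (one_div_pos.2 (hT_pos s).2)).ne')
      (fun s => by
        rw [neg_neg, one_div_one_sub_div_one_div_add (hT_pos s).1.ne' (hT_pos s).2.ne']
        exact hT_mem s)
      hab
  rw [neg_sub_neg, ← neg_sub (H' (1 - b)), neg_div] at hmem
  exact ⟨hne, hmem⟩
end
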